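/- Let E_f = {a_1, …, a_{n+1}} and E_g = {b_1, …, b_{n+1}} be multisets of integers with a_j ≥ 2 and b_j ≥ 2 for all j. Then ∏_{i=1}^{n+1} (Λ_{a_i} − 1) ≡ ∏_{i=1}^{n+1} (Λ_{b_i} − 1) (mod 2) in ℤ[ℂ*] if and only if the essential exponent sets coincide, i.e. Ē_f = Ē_g. (By Brieskorn's formula, the left-hand sides are the divisors of the Alexander polynomials of the algebraic knots of the Brieskorn polynomials z_1^{a_1} + … + z_{n+1}^{a_{n+1}} and z_1^{b_1} + … + z_{n+1}^{b_{n+1}}, so this congruence is exactly the Fox–Milnor type relation for these Alexander polynomials.) -/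

import Mathlib

open scoped Classical

/-- `Λ a ∈ ℤ[ℂˣ]`: the sum of the group-ring basis elements over all `a`-th roots of
unity in `ℂ`, i.e. the divisor of the polynomial `t ^ a - 1`. -/
noncomputable def Lambda (a : ℕ) : MonoidAlgebra ℤ ℂˣ :=
  if h : a = 0 then 0
  else
    haveI : NeZero a := ⟨h⟩
    haveI : Fintype (rootsOfUnity a ℂ) := Fintype.ofFinite _
    ∑ ζ : rootsOfUnity a ℂ, MonoidAlgebra.single (ζ : ℂˣ) (1 : ℤ)

/-- `x ≡ y (mod 2)` in the group ring `ℤ[ℂˣ]`: `x - y = 2 z` for some `z ∈ ℤ[ℂˣ]`. -/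
def Mod2 (x y : MonoidAlgebra ℤ ℂˣ) : Prop :=
  ∃ z : MonoidAlgebra ℤ ℂˣ, x - y = 2 * z

/-- The essential exponent set of a finite multiset `E` of integers `≥ 2`:
`Ē = { a ∈ E : (a is odd, or a occurs an odd number of times in E) and
no odd b ∈ E with b ≠ a divides a }`. -/
noncomputable def essentialExponents (E : Multiset ℕ) : Finset ℕ :=
  E.toFinset.filter fun a =>
    (Odd a ∨ Odd (E.count a)) ∧ ∀ b ∈ E, b ≠ a → Odd b → ¬ b ∣ a

/-!
Reduce modulo 2 and write `λ_a` for the image of `Λ_a` in `(ZMod 2)[ℂˣ]`. Every element of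
`μ_a μ_b = μ_lcm(a, b)` is a product `ζ ξ` in `|μ_a ∩ μ_b| = gcd(a, b)` ways, so
`Λ_a Λ_b = gcd(a, b) Λ_lcm(a, b)`. In characteristic 2 the factor `λ_a + 1` therefore squares to
`1` for even `a`, is idempotent for odd `a`, and is absorbed by `λ_b + 1` whenever `b` is an odd
divisor of `a`; this turns the product over `E` into the product over `Ē`.

Conversely, `∏_{a ∈ A} (1 + λ_a) = ∑_{T ⊆ A} (∏ T / lcm T) λ_{lcm T}`, and the `λ_N` (`N ≥ 1`) are
linearly independent: the coefficient at a primitive `N`-th root of unity only sees the `λ_M` with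
`N ∣ M`. Let `A ≠ B` be essential and `m` the least element of `A ∆ B`. Then every odd `t ∈ A ∪ B`
dividing `m` equals `m`, so any `T ⊆ A` with `lcm T = m` other than `{m}` consists of at least two
even numbers, which makes `∏ T / lcm T` even. Hence the coefficient of `λ_m` is `1` on the side
containing `m` and `0` on the other.
-/

open MonoidAlgebra
open scoped symmDiff

section GroupAlgebra

variable {k G : Type*} [CommSemiring k] [CommGroup G]

def Subgroup.mulFiberEquivInf {H K : Subgroup G} {h₀ k₀ : G} (hh₀ : h₀ ∈ H) (hk₀ : k₀ ∈ K) :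
    {p : H × K // (p.1 : G) * p.2 = h₀ * k₀} ≃ ↥(H ⊓ K) where
  toFun p := ⟨h₀⁻¹ * p.1.1, H.mul_mem (H.inv_mem hh₀) p.1.1.2, by
    rw [inv_mul_eq_of_eq_mul (eq_mul_inv_of_mul_eq p.2 |>.trans (mul_assoc _ _ _))]
    exact K.mul_mem hk₀ (K.inv_mem p.1.2.2)⟩
  invFun c := ⟨(⟨h₀ * c, H.mul_mem hh₀ c.2.1⟩, ⟨(c : G)⁻¹ * k₀, K.mul_mem (K.inv_mem c.2.2) hk₀⟩),
    by group⟩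
  left_inv p := by
    obtain ⟨⟨⟨h, _⟩, ⟨x, _⟩⟩, hp : h * x = h₀ * k₀⟩ := p
    ext
    · exact mul_inv_cancel_left h₀ h
    · show (h₀⁻¹ * h)⁻¹ * k₀ = x
      rw [mul_inv_rev, inv_inv, mul_assoc, inv_mul_eq_of_eq_mul hp.symm]
  right_inv c := by ext; exact inv_mul_cancel_left h₀ c

theorem MonoidAlgebra.sum_single_mul_sum_single {H K L : Subgroup G} (hL : H ⊔ K = L)
    [Fintype H] [Fintype K] [Fintype L] :
    (∑ h : H, single (h : G) (1 : k)) * (∑ x : K, single (x : G) (1 : k)) =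
      Nat.card ↥(H ⊓ K) • ∑ g : L, single (g : G) (1 : k) := by
  subst hL
  classical
  let m : H × K → ↥(H ⊔ K) := fun p => ⟨p.1 * p.2, Subgroup.mul_mem_sup p.1.2 p.2.2⟩
  simp only [Finset.sum_mul_sum, single_mul_single, one_mul]
  rw [← Fintype.sum_prod_type' (fun (h : H) (x : K) => single ((h : G) * x) (1 : k)),
    ← Fintype.sum_fiberwise m, Finset.smul_sum]
  refine Fintype.sum_congr _ _ fun g => ?_
  obtain ⟨h₀, hh₀, k₀, hk₀, hg⟩ := Subgroup.mem_sup.mp g.2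
  have hfiber : ∀ p : {p // m p = g}, single ((p.1.1 : G) * p.1.2) (1 : k) = single (g : G) 1 :=
    fun p => congrArg (single · 1) (congrArg Subtype.val p.2)
  rw [Fintype.sum_congr _ _ hfiber, Finset.sum_const, Finset.card_univ,
    ← Nat.card_eq_fintype_card]
  congr 1
  refine Nat.card_congr ((Equiv.subtypeEquivRight fun p => ?_).trans
    (Subgroup.mulFiberEquivInf hh₀ hk₀))
  rw [hg, Subtype.ext_iff]

end GroupAlgebra

theorem rootsOfUnity_sup_rootsOfUnity {M : Type*} [CommMonoid M] (m n : ℕ) :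
    rootsOfUnity m M ⊔ rootsOfUnity n M = rootsOfUnity (m.lcm n) M := by
  refine le_antisymm (sup_le (rootsOfUnity_le_of_dvd (Nat.dvd_lcm_left m n))
    (rootsOfUnity_le_of_dvd (Nat.dvd_lcm_right m n))) fun ζ hζ => ?_
  rcases Nat.eq_zero_or_pos (m.gcd n) with hd | hd
  · obtain ⟨rfl, rfl⟩ := Nat.gcd_eq_zero_iff.mp hd
    exact Subgroup.mem_sup_left ((mem_rootsOfUnity 0 ζ).mpr (pow_zero ζ))
  obtain ⟨u, v, huv⟩ : IsCoprime ((m / m.gcd n : ℕ) : ℤ) ((n / m.gcd n : ℕ) : ℤ) :=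
    Nat.isCoprime_iff_coprime.mpr (Nat.coprime_div_gcd_div_gcd hd)
  have hpow : ∀ (z : ℤ) (a b : ℕ), a * b = m.lcm n → ζ ^ (z * a) ∈ rootsOfUnity b M :=
    fun z a b hab => by
      rw [mem_rootsOfUnity, ← zpow_natCast, ← zpow_mul, mul_assoc, ← Nat.cast_mul, hab,
        mul_comm, zpow_mul, zpow_natCast, (mem_rootsOfUnity _ _).mp hζ, one_zpow]
  have hm : m / m.gcd n * n = m.lcm n := Nat.div_mul_right_comm (Nat.gcd_dvd_left m n) n
  have hn : n / m.gcd n * m = m.lcm n := by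
    rw [Nat.lcm_comm, Nat.gcd_comm]
    exact Nat.div_mul_right_comm (Nat.gcd_dvd_left n m) m
  rw [← zpow_one ζ, ← huv, add_comm, zpow_add]
  exact Subgroup.mul_mem_sup (hpow v _ m hn) (hpow u _ n hm)

theorem Nat.mul_div_lcm_eq_gcd_mul_div {a l P : ℕ} (ha : a ≠ 0) (hl : l ∣ P) :
    a * P / a.lcm l = a.gcd l * (P / l) := by
  obtain ⟨q, rfl⟩ := hl
  rcases eq_or_ne l 0 with rfl | hl0
  · simp
  rw [Nat.mul_div_cancel_left q (Nat.pos_of_ne_zero hl0), ← mul_assoc, ← Nat.gcd_mul_lcm a l,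
    mul_comm (a.gcd l), mul_assoc,
    Nat.mul_div_cancel_left _ (Nat.pos_of_ne_zero (Nat.lcm_ne_zero ha hl0))]

noncomputable instance (a : ℕ) [NeZero a] : Fintype (rootsOfUnity a ℂ) := Fintype.ofFinite _

theorem Lambda_eq_sum (a : ℕ) [NeZero a] :
    Lambda a = ∑ ζ : rootsOfUnity a ℂ, single (ζ : ℂˣ) (1 : ℤ) :=
  dif_neg (NeZero.ne a)

theorem Lambda_zero : Lambda 0 = 0 := dif_pos rfl

theorem coeff_Lambda {N : ℕ} (hN : N ≠ 0) (ζ : ℂˣ) :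
    (Lambda N).coeff ζ = if ζ ^ N = 1 then 1 else 0 := by
  have : NeZero N := ⟨hN⟩
  simp only [Lambda_eq_sum, coeff_sum, Finset.sum_apply', coeff_single, Finsupp.single_apply]
  split_ifs with h
  · rw [Fintype.sum_eq_single ⟨ζ, (mem_rootsOfUnity N ζ).mpr h⟩
      fun ξ hξ => if_neg fun e => hξ (Subtype.ext e), if_pos rfl]
  · exact Fintype.sum_eq_zero _ fun ξ =>
      if_neg fun (e : (ξ : ℂˣ) = ζ) => h (e ▸ (mem_rootsOfUnity N _).mp ξ.2)

theorem Lambda_one : Lambda 1 = 1 := by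
  ext ζ
  simp [coeff_Lambda, one_def, Finsupp.single_apply, eq_comm]

theorem Lambda_mul_Lambda (a b : ℕ) : Lambda a * Lambda b = a.gcd b • Lambda (a.lcm b) := by
  rcases eq_or_ne a 0 with rfl | ha
  · simp [Lambda_zero]
  rcases eq_or_ne b 0 with rfl | hb
  · simp [Lambda_zero]
  have : NeZero a := ⟨ha⟩
  have : NeZero b := ⟨hb⟩
  have : NeZero (a.lcm b) := ⟨Nat.lcm_ne_zero ha hb⟩
  have : NeZero (a.gcd b) := ⟨Nat.gcd_ne_zero_left ha⟩
  rw [Lambda_eq_sum, Lambda_eq_sum, Lambda_eq_sum,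
    sum_single_mul_sum_single (rootsOfUnity_sup_rootsOfUnity a b), rootsOfUnity_inf_rootsOfUnity,
    Complex.card_rootsOfUnity]

theorem prod_Lambda (T : Finset ℕ) :
    ∏ t ∈ T, Lambda t = ((∏ t ∈ T, t) / T.lcm id) • Lambda (T.lcm id) := by
  induction T using Finset.induction_on with
  | empty => simp [Lambda_one]
  | insert a T ha ih =>
    rw [Finset.prod_insert ha, Finset.prod_insert ha, Finset.lcm_insert, id, lcm_eq_nat_lcm]
    rcases eq_or_ne a 0 with rfl | ha0
    · rw [Lambda_zero, zero_mul, Nat.lcm_zero_left, Lambda_zero, smul_zero]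
    rw [ih, mul_smul_comm, Lambda_mul_Lambda, smul_smul,
      Nat.mul_div_lcm_eq_gcd_mul_div (P := ∏ t ∈ T, t) ha0 (Finset.lcm_dvd_prod T id), mul_comm]

theorem coeff_map_Lambda {k : Type*} [Ring k] {N : ℕ} (hN : N ≠ 0) (ζ : ℂˣ) :
    (mapRingHom ℂˣ (Int.castRingHom k) (Lambda N)).coeff ζ = if ζ ^ N = 1 then 1 else 0 := by
  rw [coeff_mapRingHom, coeff_Lambda hN]
  split_ifs <;> simp

theorem linearIndepOn_map_Lambda (k : Type*) [Ring k] :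
    LinearIndepOn k (fun N => mapRingHom ℂˣ (Int.castRingHom k) (Lambda N)) {N | N ≠ 0} := by
  rw [linearIndepOn_iff]
  intro l hl hcomb
  by_contra hne
  have hsupp : l.support.Nonempty := Finsupp.support_nonempty_iff.mpr hne
  set N₀ := l.support.max' hsupp
  have hN₀ : N₀ ∈ l.support := l.support.max'_mem hsupp
  have hN₀0 : N₀ ≠ 0 := (Finsupp.mem_supported k l).mp hl hN₀
  obtain ⟨ζ, hζ⟩ : ∃ ζ : ℂˣ, IsPrimitiveRoot ζ N₀ :=
    ⟨_, (Complex.isPrimitiveRoot_exp N₀ hN₀0).isUnit_unit hN₀0⟩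
  have hcoeff := congrArg (coeff · ζ) hcomb
  simp only [Finsupp.linearCombination_apply, Finsupp.sum, coeff_sum, Finset.sum_apply',
    coeff_smul_apply] at hcoeff
  rw [Finset.sum_eq_single N₀, coeff_map_Lambda hN₀0,
    if_pos ((hζ.pow_eq_one_iff_dvd N₀).mpr dvd_rfl)] at hcoeff
  · exact Finsupp.mem_support_iff.mp hN₀ (by simpa using hcoeff)
  · intro N hN hNN₀
    have hN0 : N ≠ 0 := (Finsupp.mem_supported k l).mp hl hN
    rw [coeff_map_Lambda hN0, if_neg, smul_zero]
    rw [hζ.pow_eq_one_iff_dvd]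
    exact fun hdvd => hNN₀ (le_antisymm (l.support.le_max' N hN)
      (Nat.le_of_dvd (Nat.pos_of_ne_zero hN0) hdvd))
  · exact fun h => absurd hN₀ h

instance {k G : Type*} [CommSemiring k] [Monoid G] (p : ℕ) [CharP k p] :
    CharP (MonoidAlgebra k G) p :=
  charP_of_injective_algebraMap single_right_injective p

theorem exists_eq_nsmul_iff_map_eq_zero {G : Type*} [Monoid G] (n : ℕ) (x : MonoidAlgebra ℤ G) :
    (∃ z, x = n • z) ↔ mapRingHom G (Int.castRingHom (ZMod n)) x = 0 := by
  constructor
  · rintro ⟨z, rfl⟩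
    simp
  · intro h
    refine ⟨ofCoeff (x.coeff.mapRange (· / (n : ℤ)) (Int.zero_ediv _)), ?_⟩
    ext g
    have hg : (n : ℤ) ∣ x.coeff g := by
      simpa [ZMod.intCast_zmod_eq_zero_iff_dvd] using congrArg (coeff · g) h
    rw [coeff_smul_apply, coeff_ofCoeff, Finsupp.mapRange_apply, nsmul_eq_mul,
      Int.mul_ediv_cancel' hg]

noncomputable abbrev reduceMod2 : MonoidAlgebra ℤ ℂˣ →+* MonoidAlgebra (ZMod 2) ℂˣ :=
  mapRingHom ℂˣ (Int.castRingHom (ZMod 2))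

theorem mod2_iff_reduceMod2_eq (x y : MonoidAlgebra ℤ ℂˣ) :
    Mod2 x y ↔ reduceMod2 x = reduceMod2 y := by
  rw [← sub_eq_zero, ← map_sub, ← exists_eq_nsmul_iff_map_eq_zero, Mod2]
  simp [nsmul_eq_mul]

noncomputable def factorMod2 (a : ℕ) : MonoidAlgebra (ZMod 2) ℂˣ := reduceMod2 (Lambda a - 1)

theorem factorMod2_eq (a : ℕ) : factorMod2 a = reduceMod2 (Lambda a) + 1 := by
  rw [factorMod2, map_sub, map_one, CharTwo.sub_eq_add]

theorem factorMod2_mul_factorMod2 (a b : ℕ) :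
    factorMod2 a * factorMod2 b = reduceMod2 (a.gcd b • Lambda (a.lcm b)) +
      reduceMod2 (Lambda a) + reduceMod2 (Lambda b) + 1 := by
  rw [factorMod2_eq, factorMod2_eq, ← Lambda_mul_Lambda, map_mul]
  ring

theorem factorMod2_sq_of_even {a : ℕ} (ha : Even a) : factorMod2 a ^ 2 = 1 := by
  rw [sq, factorMod2_mul_factorMod2, Nat.gcd_self, Nat.lcm_self, map_nsmul, nsmul_eq_mul,
    natCast_eq_zero_of_even_of_two_eq_zero ha CharTwo.two_eq_zero, zero_mul, zero_add,
    CharTwo.add_self_eq_zero, zero_add]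

theorem factorMod2_mul_of_odd_dvd {a b : ℕ} (hb : Odd b) (hba : b ∣ a) :
    factorMod2 a * factorMod2 b = factorMod2 b := by
  rw [factorMod2_mul_factorMod2, Nat.gcd_eq_right hba, Nat.lcm_eq_left hba, map_nsmul,
    nsmul_eq_mul, natCast_eq_one_of_odd_of_two_eq_zero hb CharTwo.two_eq_zero, one_mul,
    CharTwo.add_self_eq_zero, zero_add, factorMod2_eq]

theorem isIdempotentElem_factorMod2 {a : ℕ} (ha : Odd a) : IsIdempotentElem (factorMod2 a) :=
  factorMod2_mul_of_odd_dvd ha dvd_rfl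

theorem factorMod2_pow (a : ℕ) {c : ℕ} (hc : c ≠ 0) :
    factorMod2 a ^ c = if Odd a ∨ Odd c then factorMod2 a else 1 := by
  rcases Nat.even_or_odd a with ha | ha
  · rw [pow_eq_pow_mod c (factorMod2_sq_of_even ha)]
    rcases Nat.even_or_odd c with hc' | hc'
    · rw [Nat.even_iff.mp hc', pow_zero, if_neg (by simp [← Nat.not_even_iff_odd, ha, hc'])]
    · rw [Nat.odd_iff.mp hc', pow_one, if_pos (Or.inr hc')]
  · rw [(isIdempotentElem_factorMod2 ha).pow_eq hc, if_pos (Or.inl ha)]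

theorem prod_map_factorMod2 (E : Multiset ℕ) :
    (E.map factorMod2).prod =
      ∏ a ∈ E.toFinset.filter (fun a => Odd a ∨ Odd (E.count a)), factorMod2 a := by
  rw [Finset.prod_multiset_map_count, Finset.prod_filter]
  exact Finset.prod_congr rfl fun a ha =>
    factorMod2_pow a (Multiset.count_ne_zero.mpr (Multiset.mem_toFinset.mp ha))

theorem exists_odd_dvd_forall_not_odd_dvd {S : Finset ℕ} {a : ℕ}
    (h : ∃ b ∈ S, b ≠ a ∧ Odd b ∧ b ∣ a) :
    ∃ b ∈ S, Odd b ∧ b ∣ a ∧ ∀ c ∈ S, c ≠ b → Odd c → ¬ c ∣ b := by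
  obtain ⟨b, hb, hmin⟩ := Finset.exists_min_image (S.filter fun b => b ≠ a ∧ Odd b ∧ b ∣ a) id
    (by simpa [Finset.filter_nonempty_iff] using h)
  obtain ⟨hbS, hba, hbo, hbdvd⟩ := Finset.mem_filter.mp hb
  refine ⟨b, hbS, hbo, hbdvd, fun c hcS hcb hco hcdvd =>
    hcb (le_antisymm (Nat.le_of_dvd hbo.pos hcdvd) ?_)⟩
  refine hmin c (Finset.mem_filter.mpr ⟨hcS, fun hca => hba ?_, hco, hcdvd.trans hbdvd⟩)
  exact Nat.dvd_antisymm hbdvd (hca ▸ hcdvd)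

theorem prod_filter_not_odd_dvd {M : Type*} [CommMonoid M] {f : ℕ → M}
    (hf : ∀ a b, Odd b → b ∣ a → f a * f b = f b) (S : Finset ℕ) :
    ∏ a ∈ S.filter (fun a => ∀ b ∈ S, b ≠ a → Odd b → ¬ b ∣ a), f a = ∏ a ∈ S, f a := by
  set S' := S.filter (fun a => ∀ b ∈ S, b ≠ a → Odd b → ¬ b ∣ a)
  rw [← Finset.prod_sdiff (Finset.filter_subset _ S : S' ⊆ S)]
  refine (Finset.prod_induction f (fun z => z * ∏ a ∈ S', f a = ∏ a ∈ S', f a)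
    (fun x y hx hy => by rw [mul_assoc, hy, hx]) (one_mul _) fun a ha => ?_).symm
  obtain ⟨haS, haS'⟩ := Finset.mem_sdiff.mp ha
  obtain ⟨b, hbS, hbo, hba, hbmin⟩ :=
    exists_odd_dvd_forall_not_odd_dvd (by simpa [S', haS] using haS')
  rw [← Finset.mul_prod_erase S' f (Finset.mem_filter.mpr ⟨hbS, hbmin⟩), ← mul_assoc,
    hf a b hbo hba]

theorem essentialExponents_eq_filter (E : Multiset ℕ) :
    essentialExponents E =
      (E.toFinset.filter fun a => Odd a ∨ Odd (E.count a)).filter fun a =>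
        ∀ b ∈ E.toFinset.filter (fun a => Odd a ∨ Odd (E.count a)), b ≠ a → Odd b → ¬ b ∣ a := by
  rw [essentialExponents, Finset.filter_filter]
  refine Finset.filter_congr fun a _ => and_congr_right fun _ => ?_
  simp only [Finset.mem_filter, Multiset.mem_toFinset]
  exact forall_congr' fun b => ⟨fun h hb => h hb.1, fun h hb hba hbo => h ⟨hb, Or.inl hbo⟩ hba hbo⟩

theorem reduceMod2_prod_Lambda_sub_one (E : Multiset ℕ) :
    reduceMod2 (E.map fun a => Lambda a - 1).prod = ∏ a ∈ essentialExponents E, factorMod2 a := by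
  rw [map_multiset_prod, Multiset.map_map]
  change (E.map factorMod2).prod = _
  rw [prod_map_factorMod2, essentialExponents_eq_filter,
    prod_filter_not_odd_dvd fun a b hb hba => factorMod2_mul_of_odd_dvd hb hba]

theorem two_mul_lcm_dvd_prod {T : Finset ℕ} {e₁ e₂ : ℕ} (h₁ : e₁ ∈ T) (h₂ : e₂ ∈ T)
    (hne : e₁ ≠ e₂) (he₁ : Even e₁) (he₂ : Even e₂) : 2 * T.lcm id ∣ ∏ t ∈ T, t := by
  have hP : 2 ∣ ∏ t ∈ T, t := he₁.two_dvd.trans (Finset.dvd_prod_of_mem id h₁)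
  refine Nat.mul_dvd_of_dvd_div hP (Finset.lcm_dvd fun a ha => ?_)
  obtain ⟨e, he, hee⟩ : ∃ e ∈ T.erase a, Even e := by
    rcases eq_or_ne a e₁ with rfl | hae₁
    · exact ⟨e₂, Finset.mem_erase.mpr ⟨hne.symm, h₂⟩, he₂⟩
    · exact ⟨e₁, Finset.mem_erase.mpr ⟨hae₁.symm, h₁⟩, he₁⟩
  rw [id, Nat.dvd_div_iff_mul_dvd hP, ← Finset.mul_prod_erase T (fun t => t) ha, mul_comm]
  exact mul_dvd_mul_left a (hee.two_dvd.trans (Finset.dvd_prod_of_mem id he))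

noncomputable def prodCoeffs (A : Finset ℕ) : ℕ →₀ ZMod 2 :=
  ∑ T ∈ A.powerset, Finsupp.single (T.lcm id) (((∏ t ∈ T, t) / T.lcm id : ℕ) : ZMod 2)

theorem linearCombination_prodCoeffs (A : Finset ℕ) :
    Finsupp.linearCombination (ZMod 2) (fun N => reduceMod2 (Lambda N)) (prodCoeffs A) =
      ∏ a ∈ A, factorMod2 a := by
  simp only [prodCoeffs, map_sum, Finsupp.linearCombination_single, factorMod2_eq,
    Finset.prod_add_one, ← map_prod, prod_Lambda, map_nsmul, Nat.cast_smul_eq_nsmul]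

theorem prodCoeffs_mem_supported {A : Finset ℕ} (hA : 0 ∉ A) :
    prodCoeffs A ∈ Finsupp.supported (ZMod 2) (ZMod 2) {N | N ≠ 0} :=
  Submodule.sum_mem _ fun T hT => Finsupp.single_mem_supported _ _ fun h =>
    hA (Finset.mem_powerset.mp hT (by simpa using Finset.lcm_eq_zero_iff.mp h))

theorem prodCoeffs_apply (A : Finset ℕ) (m : ℕ) :
    prodCoeffs A m = ∑ T ∈ A.powerset.filter (fun T => T.lcm id = m),
      (((∏ t ∈ T, t) / T.lcm id : ℕ) : ZMod 2) := by
  simp [prodCoeffs, Finsupp.finsetSum_apply, Finsupp.single_apply, Finset.sum_filter]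

theorem prodCoeffs_apply_of_forall_odd_dvd {A : Finset ℕ} {m : ℕ} (hm : m ≠ 1) (hA : 0 ∉ A)
    (hodd : ∀ t ∈ A, Odd t → t ∣ m → t = m) : prodCoeffs A m = if m ∈ A then 1 else 0 := by
  rw [prodCoeffs_apply]
  have hvanish : ∀ T ∈ A.powerset.filter (fun T => T.lcm id = m), T ≠ {m} →
      (((∏ t ∈ T, t) / T.lcm id : ℕ) : ZMod 2) = 0 := by
    intro T hT hTm
    obtain ⟨hTA, hlcm⟩ := Finset.mem_filter.mp hT
    replace hTA := Finset.mem_powerset.mp hTA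
    have hdvd : ∀ t ∈ T, t ∣ m := fun t ht => hlcm ▸ Finset.dvd_lcm ht
    have hnt : T.Nontrivial := by
      rcases T.eq_empty_or_nonempty with rfl | hT0
      · exact absurd (by simpa using hlcm.symm) hm
      rcases hT0.exists_eq_singleton_or_nontrivial with ⟨t, rfl⟩ | h
      · exact absurd (by simpa using hlcm) hTm
      · exact h
    have heven : ∀ t ∈ T, Even t := fun t ht => by
      by_contra hto
      rw [Nat.not_even_iff_odd] at hto
      have htm := hodd t (hTA ht) hto (hdvd t ht)
      obtain ⟨s, hs, hst⟩ := hnt.exists_ne t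
      have hso : Odd s := Odd.of_dvd_nat (htm ▸ hto) (hdvd s hs)
      exact hst ((hodd s (hTA hs) hso (hdvd s hs)).trans htm.symm)
    obtain ⟨e₁, h₁, e₂, h₂, hne⟩ := hnt
    rw [ZMod.natCast_eq_zero_iff]
    exact Nat.dvd_div_of_mul_dvd
      (mul_comm 2 (T.lcm id) ▸ two_mul_lcm_dvd_prod h₁ h₂ hne (heven _ h₁) (heven _ h₂))
  split_ifs with hmA
  · have hm0 : m ≠ 0 := fun h => hA (h ▸ hmA)
    rw [Finset.sum_eq_single_of_mem {m} (by simpa using hmA) hvanish]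
    simp [Nat.div_self (Nat.pos_of_ne_zero hm0)]
  · refine Finset.sum_eq_zero fun T hT => hvanish T hT fun h => hmA ?_
    exact Finset.mem_powerset.mp (Finset.mem_filter.mp hT).1 (h ▸ Finset.mem_singleton_self m)

theorem eq_of_prod_factorMod2_eq {A B : Finset ℕ} (hA2 : ∀ a ∈ A, 2 ≤ a) (hB2 : ∀ b ∈ B, 2 ≤ b)
    (hA : ∀ a ∈ A, ∀ b ∈ A, b ≠ a → Odd b → ¬ b ∣ a)
    (hB : ∀ a ∈ B, ∀ b ∈ B, b ≠ a → Odd b → ¬ b ∣ a)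
    (h : ∏ a ∈ A, factorMod2 a = ∏ b ∈ B, factorMod2 b) : A = B := by
  have hA0 : 0 ∉ A := fun h0 => absurd (hA2 0 h0) (by norm_num)
  have hB0 : 0 ∉ B := fun h0 => absurd (hB2 0 h0) (by norm_num)
  have hcoeffs : prodCoeffs A = prodCoeffs B := sub_eq_zero.mp <|
    linearIndepOn_iff.mp (linearIndepOn_map_Lambda (ZMod 2)) _
      (sub_mem (prodCoeffs_mem_supported hA0) (prodCoeffs_mem_supported hB0))
      (by rw [map_sub, linearCombination_prodCoeffs, linearCombination_prodCoeffs, h, sub_self])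
  by_contra hne
  have hΔ : (A ∆ B).Nonempty := Finset.symmDiff_nonempty.mpr hne
  set m := (A ∆ B).min' hΔ
  have hm : m ∈ A ∆ B := (A ∆ B).min'_mem hΔ
  have hm2 : 2 ≤ m := (Finset.mem_symmDiff.mp hm).elim (hA2 m ·.1) (hB2 m ·.1)
  have hodd : ∀ t ∈ A ∪ B, Odd t → t ∣ m → t = m := by
    intro t ht hto htm
    by_cases htΔ : t ∈ A ∆ B
    · exact le_antisymm (Nat.le_of_dvd (by omega) htm) ((A ∆ B).min'_le t htΔ)
    have htAB : t ∈ A ∧ t ∈ B := by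
      simp only [Finset.mem_symmDiff, Finset.mem_union] at htΔ ht
      tauto
    by_contra htm'
    rcases Finset.mem_symmDiff.mp hm with ⟨hmA, -⟩ | ⟨hmB, -⟩
    · exact hA m hmA t htAB.1 htm' hto htm
    · exact hB m hmB t htAB.2 htm' hto htm
  have hm' := congrArg (· m) hcoeffs
  rw [prodCoeffs_apply_of_forall_odd_dvd (by omega) hA0 fun t ht => hodd t (by simp [ht]),
    prodCoeffs_apply_of_forall_odd_dvd (by omega) hB0 fun t ht => hodd t (by simp [ht])] at hm'
  rcases Finset.mem_symmDiff.mp hm with ⟨hmA, hmB⟩ | ⟨hmB, hmA⟩ <;> simp [hmA, hmB] at hm'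

theorem two_le_of_mem_essentialExponents {E : Multiset ℕ} (hE : ∀ a ∈ E, 2 ≤ a) :
    ∀ a ∈ essentialExponents E, 2 ≤ a :=
  fun a ha => hE a (Multiset.mem_toFinset.mp (Finset.mem_filter.mp ha).1)

theorem not_odd_dvd_of_mem_essentialExponents (E : Multiset ℕ) :
    ∀ a ∈ essentialExponents E, ∀ b ∈ essentialExponents E, b ≠ a → Odd b → ¬ b ∣ a :=
  fun _ ha b hb => (Finset.mem_filter.mp ha).2.2 b
    (Multiset.mem_toFinset.mp (Finset.mem_filter.mp hb).1)

theorem foxMilnor_iff_essential_eq_general (Ef Eg : Multiset ℕ)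
    (hf2 : ∀ a ∈ Ef, 2 ≤ a) (hg2 : ∀ b ∈ Eg, 2 ≤ b) :
    Mod2 ((Ef.map fun a => Lambda a - 1).prod) ((Eg.map fun a => Lambda a - 1).prod) ↔
      essentialExponents Ef = essentialExponents Eg := by
  rw [mod2_iff_reduceMod2_eq, reduceMod2_prod_Lambda_sub_one, reduceMod2_prod_Lambda_sub_one]
  exact ⟨eq_of_prod_factorMod2_eq (two_le_of_mem_essentialExponents hf2)
    (two_le_of_mem_essentialExponents hg2) (not_odd_dvd_of_mem_essentialExponents Ef)
    (not_odd_dvd_of_mem_essentialExponents Eg), fun h => h ▸ rfl⟩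

/-- Fox–Milnor type relation for Brieskorn polynomials: for multisets of exponents
`E_f = {a_1, …, a_{n+1}}` and `E_g = {b_1, …, b_{n+1}}` with all entries `≥ 2`,
`∏ (Λ_{a_i} - 1) ≡ ∏ (Λ_{b_i} - 1) (mod 2)` in `ℤ[ℂˣ]` iff the essential exponent sets
coincide. -/
theorem foxMilnor_iff_essential_eq (n : ℕ) (Ef Eg : Multiset ℕ)
    (hfc : Multiset.card Ef = n + 1) (hgc : Multiset.card Eg = n + 1)
    (hf2 : ∀ a ∈ Ef, 2 ≤ a) (hg2 : ∀ b ∈ Eg, 2 ≤ b) :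
    Mod2 ((Ef.map fun a => Lambda a - 1).prod) ((Eg.map fun a => Lambda a - 1).prod) ↔
      essentialExponents Ef = essentialExponents Eg :=
  foxMilnor_iff_essential_eq_general Ef Eg hf2 hg2
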